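/- A linear fractional map φ(z) = (az+b)/(cz+d) with ad-bc ≠ 0 maps the open unit disk into itself if and only if |d| > |c| and 2|a·conj(b) - c·conj(d)| ≤ |c|² + |d|² - |a|² - |b|². -/

import Mathlib

/-!
Put `β = a b̄ - c d̄`, `α = |c|² - |a|²`, `γ = |d|² - |b|²`. Expanding,
`|cz + dw|² - |az + bw|² = α|z|² - 2 Re(β z w̄) + γ|w|²`, whose minimum over `|z| = r`, `w = 1`
is `p(r) = αr² - 2|β|r + γ`.

Forward: `|az + b| < |cz + d|` on the disk minus the pole, hence `|az + b| ≤ |cz + d|` on the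
closed disk by continuity. At the pole `-d/c` this is impossible since `ad - bc ≠ 0`, so the pole
lies outside the closed disk; at the minimising point of the unit circle it reads `p(1) ≥ 0`.

Backward: at `(z, w) = (d, -c)` the form equals `-|ad - bc|² < 0`, so `p` is negative at
`|d|/|c| > 1` (read homogeneously when `c = 0`). Together with `p(1) ≥ 0` this keeps `p`
positive on `[0, 1)`: for `α ≥ 0` by convexity, for `α < 0` by concavity since then `p(0) > 0`.
-/

open Complex ComplexConjugate Metric Set

theorem quadratic_pos_of_nonneg_at_one_of_neg_beyond {α B γ C D r : ℝ} (hB : 0 ≤ B)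
    (hC : 0 ≤ C) (hCD : C < D) (hone : 0 ≤ α - 2 * B + γ)
    (hbeyond : α * D ^ 2 - 2 * B * (D * C) + γ * C ^ 2 < 0) (hr0 : 0 ≤ r) (hr1 : r < 1) :
    0 < α * r ^ 2 - 2 * B * r + γ := by
  rcases lt_or_ge α 0 with hα | hα
  · have hγ : 0 < γ := by linarith
    have hconcave : α * r ^ 2 - 2 * B * r + γ =
        (1 - r) * γ + r * (α - 2 * B + γ) - α * r * (1 - r) := by ring
    rw [hconcave]
    nlinarith [mul_pos (sub_pos.mpr hr1) hγ, mul_nonneg hr0 hone,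
      mul_nonneg (mul_nonneg (neg_nonneg.mpr hα.le) hr0) (sub_pos.mpr hr1).le]
  · have hC0 : 0 < C := by
      rcases hC.eq_or_lt with rfl | hC0
      · nlinarith [mul_nonneg hα (sq_nonneg D)]
      · exact hC0
    have hDrC : 0 < D - r * C := by nlinarith
    -- `1` is a convex combination of `r` and `D / C`, cleared of denominators
    have hconvex : (D - C) * C ^ 2 * (α * r ^ 2 - 2 * B * r + γ) =
        (D - r * C) * C ^ 2 * (α - 2 * B + γ)
          - (1 - r) * C * (α * D ^ 2 - 2 * B * (D * C) + γ * C ^ 2)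
          + α * (D - C) * (1 - r) * (D - r * C) * C := by ring
    have hpos : 0 < (D - C) * C ^ 2 * (α * r ^ 2 - 2 * B * r + γ) := by
      rw [hconvex]
      have h1 : 0 ≤ (D - r * C) * C ^ 2 * (α - 2 * B + γ) := by positivity
      have h2 : 0 < (1 - r) * C * -(α * D ^ 2 - 2 * B * (D * C) + γ * C ^ 2) :=
        mul_pos (mul_pos (sub_pos.mpr hr1) hC0) (neg_pos.mpr hbeyond)
      have h3 : 0 ≤ α * (D - C) * (1 - r) * (D - r * C) * C :=
        mul_nonneg (mul_nonneg (mul_nonneg (mul_nonneg hα (sub_pos.mpr hCD).le)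
          (sub_pos.mpr hr1).le) hDrC.le) hC0.le
      linarith
    exact pos_of_mul_pos_right hpos (by positivity)

theorem sq_norm_mul_add_sub_sq_norm_mul_add (a b c d z w : ℂ) :
    ‖c * z + d * w‖ ^ 2 - ‖a * z + b * w‖ ^ 2 =
      (‖c‖ ^ 2 - ‖a‖ ^ 2) * ‖z‖ ^ 2 - 2 * ((a * conj b - c * conj d) * (z * conj w)).re
        + (‖d‖ ^ 2 - ‖b‖ ^ 2) * ‖w‖ ^ 2 := by
  simp only [Complex.sq_norm, normSq_apply, add_re, add_im, sub_re, sub_im, mul_re, mul_im,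
    conj_re, conj_im]
  ring

theorem quadratic_le_sq_norm_mul_add_sub_sq_norm_mul_add (a b c d z w : ℂ) :
    (‖c‖ ^ 2 - ‖a‖ ^ 2) * ‖z‖ ^ 2 - 2 * ‖a * conj b - c * conj d‖ * (‖z‖ * ‖w‖)
        + (‖d‖ ^ 2 - ‖b‖ ^ 2) * ‖w‖ ^ 2 ≤
      ‖c * z + d * w‖ ^ 2 - ‖a * z + b * w‖ ^ 2 := by
  have hre := re_le_norm ((a * conj b - c * conj d) * (z * conj w))
  rw [norm_mul, norm_mul, norm_conj] at hre
  rw [sq_norm_mul_add_sub_sq_norm_mul_add]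
  linarith

theorem exists_norm_eq_one_mul_eq_norm (β : ℂ) : ∃ u : ℂ, ‖u‖ = 1 ∧ β * u = ‖β‖ := by
  refine ⟨(exp (arg β * I))⁻¹, by rw [norm_inv, norm_exp_ofReal_mul_I, inv_one], ?_⟩
  nth_rewrite 1 [← norm_mul_exp_arg_mul_I β]
  rw [mul_assoc, mul_inv_cancel₀ (exp_ne_zero _), mul_one]

theorem ne_zero_or_ne_zero_of_mul_sub_mul_ne_zero {R : Type*} [NonUnitalNonAssocRing R]
    {a b c d : R} (h : a * d - b * c ≠ 0) : c ≠ 0 ∨ d ≠ 0 := by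
  by_contra! hcd
  simp [hcd.1, hcd.2] at h

theorem mul_add_ne_zero_of_ne_neg_div {c d z : ℂ} (hcd : c ≠ 0 ∨ d ≠ 0) (hz : z ≠ -d / c) :
    c * z + d ≠ 0 := by
  intro h
  rcases eq_or_ne c 0 with rfl | hc
  · simp_all
  · exact hz (by field_simp; linear_combination h)

theorem closedBall_subset_closure_ball_diff_singleton {E : Type*} [NormedAddCommGroup E]
    [NormedSpace ℝ E] [Nontrivial E] (x w : E) {r : ℝ} (hr : r ≠ 0) :
    closedBall x r ⊆ closure (ball x r \ {w}) := by
  rw [← closure_ball x hr, sdiff_eq]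
  exact closure_minimal ((dense_compl_singleton w).open_subset_closure_inter isOpen_ball)
    isClosed_closure

-- `H` says nothing at the pole `-d / c`, where `x / 0 = 0`; continuity fills the gap.
theorem norm_mul_add_le_of_forall_norm_div_lt_one {a b c d : ℂ} (hcd : c ≠ 0 ∨ d ≠ 0)
    (H : ∀ z : ℂ, ‖z‖ < 1 → ‖(a * z + b) / (c * z + d)‖ < 1) {z : ℂ} (hz : ‖z‖ ≤ 1) :
    ‖a * z + b‖ ≤ ‖c * z + d‖ := by
  have hclosed : IsClosed {z : ℂ | ‖a * z + b‖ ≤ ‖c * z + d‖} := isClosed_le (by fun_prop)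
    (by fun_prop)
  refine closure_minimal (fun x hx => ?_) hclosed
    (closedBall_subset_closure_ball_diff_singleton 0 (-d / c) one_ne_zero
      (mem_closedBall_zero_iff.mpr hz))
  have hden := mul_add_ne_zero_of_ne_neg_div hcd hx.2
  have hlt := H x (mem_ball_zero_iff.mp hx.1)
  rw [norm_div, div_lt_one (norm_pos_iff.mpr hden)] at hlt
  exact hlt.le

theorem norm_lt_norm_of_forall_norm_div_lt_one {a b c d : ℂ} (h : a * d - b * c ≠ 0)
    (H : ∀ z : ℂ, ‖z‖ < 1 → ‖(a * z + b) / (c * z + d)‖ < 1) : ‖c‖ < ‖d‖ := by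
  by_contra! hdc
  have hc : c ≠ 0 := fun hc => by simp_all
  have hpole := norm_mul_add_le_of_forall_norm_div_lt_one
    (ne_zero_or_ne_zero_of_mul_sub_mul_ne_zero h) H (z := -d / c)
    (by rw [norm_div, norm_neg]; exact div_le_one_of_le₀ hdc (norm_nonneg c))
  have hzero : a * (-d / c) + b = 0 := by simpa [mul_div_cancel₀ _ hc] using hpole
  field_simp at hzero
  exact h (by linear_combination -hzero)

theorem two_mul_norm_le_of_forall_norm_div_lt_one {a b c d : ℂ} (hcd : c ≠ 0 ∨ d ≠ 0)
    (H : ∀ z : ℂ, ‖z‖ < 1 → ‖(a * z + b) / (c * z + d)‖ < 1) :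
    2 * ‖a * conj b - c * conj d‖ ≤ ‖c‖ ^ 2 + ‖d‖ ^ 2 - ‖a‖ ^ 2 - ‖b‖ ^ 2 := by
  obtain ⟨u, hu, hβu⟩ := exists_norm_eq_one_mul_eq_norm (a * conj b - c * conj d)
  have hle := norm_mul_add_le_of_forall_norm_div_lt_one hcd H hu.le
  have hid := sq_norm_mul_add_sub_sq_norm_mul_add a b c d u 1
  simp only [mul_one, map_one, hβu, ofReal_re, hu, norm_one, one_pow] at hid
  nlinarith [pow_le_pow_left₀ (norm_nonneg _) hle 2]

theorem norm_div_lt_one_of_norm_lt_norm_of_two_mul_norm_le {a b c d z : ℂ}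
    (h : a * d - b * c ≠ 0) (hdc : ‖c‖ < ‖d‖)
    (hineq : 2 * ‖a * conj b - c * conj d‖ ≤ ‖c‖ ^ 2 + ‖d‖ ^ 2 - ‖a‖ ^ 2 - ‖b‖ ^ 2)
    (hz : ‖z‖ < 1) : ‖(a * z + b) / (c * z + d)‖ < 1 := by
  have hbeyond := quadratic_le_sq_norm_mul_add_sub_sq_norm_mul_add a b c d d (-c)
  rw [norm_neg, show c * d + d * -c = 0 by ring, show a * d + b * -c = a * d - b * c by ring,
    norm_zero] at hbeyond
  have hpos := quadratic_pos_of_nonneg_at_one_of_neg_beyond (α := ‖c‖ ^ 2 - ‖a‖ ^ 2)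
    (γ := ‖d‖ ^ 2 - ‖b‖ ^ 2) (norm_nonneg (a * conj b - c * conj d)) (norm_nonneg c) hdc
    (by linarith) (by nlinarith [norm_pos_iff.mpr h]) (norm_nonneg z) hz
  have hlow := quadratic_le_sq_norm_mul_add_sub_sq_norm_mul_add a b c d z 1
  simp only [mul_one, norm_one, one_pow] at hlow
  have hlt : ‖a * z + b‖ < ‖c * z + d‖ :=
    lt_of_pow_lt_pow_left₀ 2 (norm_nonneg _) (by linarith)
  rw [norm_div, div_lt_one ((norm_nonneg _).trans_lt hlt)]
  exact hlt

theorem lft_self_map_criterion' (a b c d : ℂ) (h : a * d - b * c ≠ 0) :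
    (∀ z : ℂ, ‖z‖ < 1 → ‖(a * z + b) / (c * z + d)‖ < 1) ↔
      (‖c‖ < ‖d‖ ∧
        2 * ‖a * (starRingEnd ℂ) b - c * (starRingEnd ℂ) d‖ ≤
          ‖c‖ ^ 2 + ‖d‖ ^ 2 - ‖a‖ ^ 2 - ‖b‖ ^ 2) :=
  ⟨fun H => ⟨norm_lt_norm_of_forall_norm_div_lt_one h H,
      two_mul_norm_le_of_forall_norm_div_lt_one (ne_zero_or_ne_zero_of_mul_sub_mul_ne_zero h) H⟩,
    fun ⟨hdc, hineq⟩ _ hz => norm_div_lt_one_of_norm_lt_norm_of_two_mul_norm_le h hdc hineq hz⟩
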